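/- Let A ∈ ℝ^{m×n}, let H ∈ ℝ^{n×n} be symmetric positive definite, and let R_d ∈ ℝ^{m×m} be symmetric positive definite. Then every strictly negative eigenvalue μ of the symmetric matrix M = [[−H, Aᵀ],[A, R_d]] satisfies both μ ≤ −λ_min(H) and μ ≥ (1/2) ( (λ_min(R_d) − λ_max(H)) − [ (λ_max(H) + λ_min(R_d))² + 4 σ_max(A)² ]^{1/2} ). -/

import Mathlib

open Matrix

/-- Spectral norm (largest singular value) of a real matrix. -/
noncomputable def specNorm {m n : ℕ} (A : Matrix (Fin m) (Fin n) ℝ) : ℝ :=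
  Real.sqrt (⨆ i, (Matrix.isHermitian_mul_conjTranspose_self A).eigenvalues i)

/-!
Write an eigenvector of `M = [[-H, Aᵀ], [A, R]]` as `(u, v)` and pair the two block rows of
`M (u, v) = μ (u, v)` with `u` and `v`. This gives `-uᵀHu + uᵀAᵀv = μ‖u‖²` and
`uᵀAᵀv + vᵀRv = μ‖v‖²`.

For the upper bound, `R ≥ 0` and `μ < 0` force `uᵀAᵀv ≤ 0` and `u ≠ 0`, so the first identity
gives `μ‖u‖² ≤ -uᵀHu ≤ -λ_min(H)‖u‖²`.

For the lower bound, add the identities: `μ(‖u‖² + ‖v‖²) = -uᵀHu + vᵀRv + 2uᵀAᵀv`, which is at least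
`-λ_max(H)s² + λ_min(R)t² - 2σ_max(A)st` with `s = ‖u‖`, `t = ‖v‖`. That quadratic form in `(s, t)`
is bounded below by the smaller eigenvalue of its `2 × 2` matrix times `s² + t²`.
-/

open scoped MatrixOrder

namespace Matrix

section Rayleigh

variable {ι : Type*} [Fintype ι] [DecidableEq ι] {B : Matrix ι ι ℝ}

lemma IsHermitian.algebraMap_iInf_eigenvalues_le (hB : B.IsHermitian) :
    algebraMap ℝ (Matrix ι ι ℝ) (⨅ i, hB.eigenvalues i) ≤ B := by
  rw [algebraMap_le_iff_le_spectrum hB.isSelfAdjoint, hB.spectrum_real_eq_range_eigenvalues]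
  rintro _ ⟨i, rfl⟩
  exact ciInf_le (Set.finite_range _).bddBelow i

lemma IsHermitian.le_algebraMap_iSup_eigenvalues (hB : B.IsHermitian) :
    B ≤ algebraMap ℝ (Matrix ι ι ℝ) (⨆ i, hB.eigenvalues i) := by
  rw [le_algebraMap_iff_spectrum_le hB.isSelfAdjoint, hB.spectrum_real_eq_range_eigenvalues]
  rintro _ ⟨i, rfl⟩
  exact le_ciSup (Set.finite_range _).bddAbove i

lemma dotProduct_algebraMap_mulVec (c : ℝ) (u : ι → ℝ) :
    u ⬝ᵥ (algebraMap ℝ (Matrix ι ι ℝ) c *ᵥ u) = c * (u ⬝ᵥ u) := by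
  rw [Algebra.algebraMap_eq_smul_one, smul_mulVec, one_mulVec, dotProduct_smul, smul_eq_mul]

lemma IsHermitian.iInf_eigenvalues_mul_dotProduct_self_le (hB : B.IsHermitian) (u : ι → ℝ) :
    (⨅ i, hB.eigenvalues i) * (u ⬝ᵥ u) ≤ u ⬝ᵥ (B *ᵥ u) := by
  have h := (le_iff.mp hB.algebraMap_iInf_eigenvalues_le).dotProduct_mulVec_nonneg u
  rw [star_trivial, sub_mulVec, dotProduct_sub, dotProduct_algebraMap_mulVec] at h
  linarith

lemma IsHermitian.dotProduct_mulVec_le_iSup_eigenvalues_mul (hB : B.IsHermitian) (u : ι → ℝ) :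
    u ⬝ᵥ (B *ᵥ u) ≤ (⨆ i, hB.eigenvalues i) * (u ⬝ᵥ u) := by
  have h := (le_iff.mp hB.le_algebraMap_iSup_eigenvalues).dotProduct_mulVec_nonneg u
  rw [star_trivial, sub_mulVec, dotProduct_sub, dotProduct_algebraMap_mulVec] at h
  linarith

end Rayleigh

section Self

variable {ι R : Type*} [Fintype ι] [Ring R] [LinearOrder R] [IsStrictOrderedRing R]

lemma dotProduct_self_nonneg (u : ι → R) : 0 ≤ u ⬝ᵥ u :=
  Finset.sum_nonneg fun i _ => mul_self_nonneg (u i)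

lemma dotProduct_self_pos {u : ι → R} (hu : u ≠ 0) : 0 < u ⬝ᵥ u :=
  (dotProduct_self_nonneg u).lt_of_ne' (dotProduct_self_eq_zero.not.mpr hu)

end Self

lemma dotProduct_self_transpose_mulVec {m n : Type*} [Fintype m] [Fintype n]
    (A : Matrix m n ℝ) (v : m → ℝ) :
    (Aᵀ *ᵥ v) ⬝ᵥ (Aᵀ *ᵥ v) = v ⬝ᵥ ((A * Aᴴ) *ᵥ v) := by
  rw [conjTranspose_eq_transpose_of_trivial, ← mulVec_mulVec, dotProduct_mulVec v A,
    mulVec_transpose]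

lemma dotProduct_self_transpose_mulVec_le {m n : ℕ} (A : Matrix (Fin m) (Fin n) ℝ)
    (v : Fin m → ℝ) : (Aᵀ *ᵥ v) ⬝ᵥ (Aᵀ *ᵥ v) ≤ specNorm A ^ 2 * (v ⬝ᵥ v) := by
  rw [dotProduct_self_transpose_mulVec]
  refine ((isHermitian_mul_conjTranspose_self A).dotProduct_mulVec_le_iSup_eigenvalues_mul
    v).trans ?_
  gcongr
  · exact dotProduct_self_nonneg v
  · rw [specNorm, Real.sq_sqrt']
    exact le_max_left _ _

lemma abs_dotProduct_transpose_mulVec_le {m n : ℕ} (A : Matrix (Fin m) (Fin n) ℝ)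
    (u : Fin n → ℝ) (v : Fin m → ℝ) :
    |u ⬝ᵥ (Aᵀ *ᵥ v)| ≤ specNorm A * √(u ⬝ᵥ u) * √(v ⬝ᵥ v) := by
  have hu := dotProduct_self_nonneg u
  have hv := dotProduct_self_nonneg v
  have hσ : 0 ≤ specNorm A := Real.sqrt_nonneg _
  apply abs_le_of_sq_le_sq _ (by positivity)
  calc (u ⬝ᵥ (Aᵀ *ᵥ v)) ^ 2 ≤ (u ⬝ᵥ u) * ((Aᵀ *ᵥ v) ⬝ᵥ (Aᵀ *ᵥ v)) := by
        simpa [dotProduct, pow_two] using Finset.sum_mul_sq_le_sq_mul_sq Finset.univ u (Aᵀ *ᵥ v)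
    _ ≤ (u ⬝ᵥ u) * (specNorm A ^ 2 * (v ⬝ᵥ v)) := by
        gcongr
        exact dotProduct_self_transpose_mulVec_le A v
    _ = (specNorm A * √(u ⬝ᵥ u) * √(v ⬝ᵥ v)) ^ 2 := by
        rw [mul_pow, mul_pow, Real.sq_sqrt hu, Real.sq_sqrt hv]
        ring

end Matrix

/-- The left side is the smaller eigenvalue of `[[-h, -σ], [-σ, r]]` times `s² + t²`. -/
lemma half_sub_sqrt_mul_sq_add_sq_le (h r σ s t : ℝ) :
    (1 / 2) * ((r - h) - √((h + r) ^ 2 + 4 * σ ^ 2)) * (s ^ 2 + t ^ 2) ≤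
      -h * s ^ 2 + r * t ^ 2 - 2 * σ * s * t := by
  set W := (h + r) ^ 2 + 4 * σ ^ 2
  have hW : √W ^ 2 = W := Real.sq_sqrt (by positivity)
  -- Cauchy–Schwarz for `(h + r, 2σ)` and `(t² - s², -2st)`, the latter of length `s² + t²`
  have key : -(√W * (s ^ 2 + t ^ 2)) ≤ (h + r) * (t ^ 2 - s ^ 2) - 4 * σ * s * t := by
    refine (abs_le_of_sq_le_sq' ?_ (by positivity)).1
    rw [mul_pow, hW]
    nlinarith [sq_nonneg ((h + r) * (2 * s * t) + 2 * σ * (t ^ 2 - s ^ 2))]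
  linarith

namespace Matrix

section SaddlePoint

variable {ι κ : Type*} [Fintype ι] [Fintype κ] {H : Matrix ι ι ℝ} {A : Matrix κ ι ℝ}
  {R : Matrix κ κ ℝ} {μ : ℝ}

lemma dotProduct_eq_of_fromBlocks_mulVec_eq_smul {u : ι → ℝ} {v : κ → ℝ}
    (h : fromBlocks (-H) Aᵀ A R *ᵥ Sum.elim u v = μ • Sum.elim u v) :
    -(u ⬝ᵥ (H *ᵥ u)) + u ⬝ᵥ (Aᵀ *ᵥ v) = μ * (u ⬝ᵥ u) ∧
      u ⬝ᵥ (Aᵀ *ᵥ v) + v ⬝ᵥ (R *ᵥ v) = μ * (v ⬝ᵥ v) := by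
  rw [fromBlocks_mulVec] at h
  have hu : (-H) *ᵥ u + Aᵀ *ᵥ v = μ • u :=
    funext fun i => by simpa using congrFun h (Sum.inl i)
  have hv : A *ᵥ u + R *ᵥ v = μ • v :=
    funext fun j => by simpa using congrFun h (Sum.inr j)
  have hA : v ⬝ᵥ (A *ᵥ u) = u ⬝ᵥ (Aᵀ *ᵥ v) := by
    rw [dotProduct_mulVec, mulVec_transpose, dotProduct_comm]
  constructor
  · simpa [dotProduct_add, neg_mulVec] using congrArg (u ⬝ᵥ ·) hu
  · simpa [dotProduct_add, hA] using congrArg (v ⬝ᵥ ·) hv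

lemma le_neg_iInf_eigenvalues_of_fromBlocks_mulVec_eq_smul [DecidableEq ι]
    (hH : H.IsHermitian) (hR : R.PosSemidef) (hμ : μ < 0) {x : ι ⊕ κ → ℝ} (hx : x ≠ 0)
    (h : fromBlocks (-H) Aᵀ A R *ᵥ x = μ • x) : μ ≤ -⨅ i, hH.eigenvalues i := by
  obtain ⟨u, v, rfl⟩ : ∃ u v, x = Sum.elim u v := ⟨_, _, (Sum.elim_comp_inl_inr x).symm⟩
  obtain ⟨hu_eq, hv_eq⟩ := dotProduct_eq_of_fromBlocks_mulVec_eq_smul h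
  have hR_nonneg : 0 ≤ v ⬝ᵥ (R *ᵥ v) := by
    simpa using hR.dotProduct_mulVec_nonneg v
  have hv_nonneg := dotProduct_self_nonneg v
  rcases eq_or_ne u 0 with rfl | hu
  · have hv : v ≠ 0 := by
      rintro rfl
      exact hx Sum.elim_zero_zero
    have hv_pos := dotProduct_self_pos hv
    simp only [zero_dotProduct, zero_add] at hv_eq
    nlinarith
  · have hcross : u ⬝ᵥ (Aᵀ *ᵥ v) ≤ 0 := by nlinarith
    have hH_ge := hH.iInf_eigenvalues_mul_dotProduct_self_le u
    refine le_of_mul_le_mul_right ?_ (dotProduct_self_pos hu)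
    linarith

end SaddlePoint

lemma half_sub_sqrt_le_of_fromBlocks_mulVec_eq_smul {m n : ℕ} {H : Matrix (Fin n) (Fin n) ℝ}
    {A : Matrix (Fin m) (Fin n) ℝ} {R : Matrix (Fin m) (Fin m) ℝ} {μ : ℝ} (hH : H.IsHermitian)
    (hR : R.IsHermitian) {x : Fin n ⊕ Fin m → ℝ} (hx : x ≠ 0)
    (h : fromBlocks (-H) Aᵀ A R *ᵥ x = μ • x) :
    (1 / 2) * (((⨅ i, hR.eigenvalues i) - ⨆ i, hH.eigenvalues i) -
      √(((⨆ i, hH.eigenvalues i) + ⨅ i, hR.eigenvalues i) ^ 2 + 4 * specNorm A ^ 2)) ≤ μ := by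
  obtain ⟨u, v, rfl⟩ : ∃ u v, x = Sum.elim u v := ⟨_, _, (Sum.elim_comp_inl_inr x).symm⟩
  obtain ⟨hu_eq, hv_eq⟩ := dotProduct_eq_of_fromBlocks_mulVec_eq_smul h
  have hx_pos : 0 < u ⬝ᵥ u + v ⬝ᵥ v := by
    rw [← sumElim_dotProduct_sumElim]
    exact dotProduct_self_pos hx
  have hH_le := hH.dotProduct_mulVec_le_iSup_eigenvalues_mul u
  have hR_ge := hR.iInf_eigenvalues_mul_dotProduct_self_le v
  have hA_ge := neg_le_of_abs_le (abs_dotProduct_transpose_mulVec_le A u v)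
  have hform := half_sub_sqrt_mul_sq_add_sq_le (⨆ i, hH.eigenvalues i) (⨅ i, hR.eigenvalues i)
    (specNorm A) √(u ⬝ᵥ u) √(v ⬝ᵥ v)
  rw [Real.sq_sqrt (dotProduct_self_nonneg u),
    Real.sq_sqrt (dotProduct_self_nonneg v)] at hform
  refine le_of_mul_le_mul_right ?_ hx_pos
  linarith

end Matrix

theorem stmt_15 {m n : ℕ} (A : Matrix (Fin m) (Fin n) ℝ)
    (H : Matrix (Fin n) (Fin n) ℝ) (hH : H.PosDef)
    (Rd : Matrix (Fin m) (Fin m) ℝ) (hRd : Rd.PosDef)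
    (M : Matrix (Fin n ⊕ Fin m) (Fin n ⊕ Fin m) ℝ)
    (hMdef : M = Matrix.fromBlocks (-H) Aᵀ A Rd) :
    ∀ μ : ℝ, μ < 0 →
      ∀ x : Fin n ⊕ Fin m → ℝ, x ≠ 0 → M.mulVec x = μ • x →
      (μ ≤ -(⨅ i, hH.1.eigenvalues i)) ∧
      ((1 / 2) * (((⨅ i, hRd.1.eigenvalues i) - ⨆ i, hH.1.eigenvalues i) -
        Real.sqrt (((⨆ i, hH.1.eigenvalues i) + ⨅ i, hRd.1.eigenvalues i) ^ 2 +
          4 * specNorm A ^ 2)) ≤ μ) := by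
  rintro μ hμ x hx hx_eig
  subst hMdef
  exact ⟨le_neg_iInf_eigenvalues_of_fromBlocks_mulVec_eq_smul hH.1 hRd.posSemidef hμ hx hx_eig,
    half_sub_sqrt_le_of_fromBlocks_mulVec_eq_smul hH.1 hRd.1 hx hx_eig⟩
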